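/- arXiv:1912.02090 — 3 statements merged into one kernel-verified Lean document; each statement's English description precedes it below -/
import Mathlib

section
/- Monotonicity of the Fisher information along Markov kernels in the one-dimensional case: let μ be a probability measure on X, T: X ⇝ Y a Markov kernel, and φ ∈ L²(X, μ). Then the Radon-Nikodym derivative ψ = d(T_*(φ·μ))/d(T_*μ) exists and satisfies ‖ψ‖_{L²(Y, T_*μ)} ≤ ‖φ‖_{L²(X, μ)}. -/
/-!
On the joint law `μ ⊗ₘ T` of `(x, y)`, the first marginal is `μ` and the second is `T_*μ`.
The conditional expectation of `φ(x)` given `y` is a function `ψ(y)` of `y` alone; its integrals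
over the events `{y ∈ B}` are those of `φ(x)`, i.e. `T_*(φ·μ)(B)`, so `ψ` is the density of
`T_*(φ·μ)`, and conditional expectation contracts the `L²` norm.
-/

open MeasureTheory ProbabilityTheory

namespace MeasureTheory.MeasurePreserving

variable {α β E : Type*} {mα : MeasurableSpace α} {mβ : MeasurableSpace β}
  [NormedAddCommGroup E] [NormedSpace ℝ E] [CompleteSpace E]
  {π : Measure α} [IsFiniteMeasure π] {ν : Measure β} {f : α → β}

theorem exists_memLp_setIntegral_eq_setIntegral_preimage (hf : MeasurePreserving f π ν)
    {F : α → E} {p : ENNReal} (hp : 1 ≤ p) (hF : MemLp F p π) :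
    ∃ ψ : β → E, MemLp ψ p ν ∧
      (∀ B, MeasurableSet B → ∫ y in B, ψ y ∂ν = ∫ a in f ⁻¹' B, F a ∂π) ∧
      eLpNorm ψ p ν ≤ eLpNorm F p π := by
  have hm : mβ.comap f ≤ mα := hf.measurable.comap_le
  obtain ⟨ψ, hψ, hcomp⟩ :=
    (stronglyMeasurable_condExp (m := mβ.comap f) (μ := π) (f := F)).exists_eq_measurable_comp
  have hnorm : eLpNorm ψ p ν = eLpNorm (π[F | mβ.comap f]) p π := by
    rw [hcomp, eLpNorm_comp_measurePreserving hψ.aestronglyMeasurable hf]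
  refine ⟨ψ, ⟨hψ.aestronglyMeasurable, ?_⟩, fun B hB => ?_, ?_⟩
  · rw [hnorm]
    exact (hF.condExp hp).eLpNorm_lt_top
  · rw [← hf.map_eq, setIntegral_map hB (hf.map_eq ▸ hψ.aestronglyMeasurable)
      hf.measurable.aemeasurable, ← setIntegral_condExp hm (hF.integrable hp) ⟨B, hB, rfl⟩, hcomp]
    rfl
  · rw [hnorm]
    exact eLpNorm_condExp_le_eLpNorm F hp

end MeasureTheory.MeasurePreserving

theorem setIntegral_preimage_snd_compProd {X Y : Type*} {mX : MeasurableSpace X}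
    {mY : MeasurableSpace Y} {μ : Measure X} [SFinite μ] {T : Kernel X Y} [IsMarkovKernel T]
    {φ : X → ℝ} (hφ : Integrable φ μ) {B : Set Y} (hB : MeasurableSet B) :
    ∫ p in Prod.snd ⁻¹' B, φ p.1 ∂(μ ⊗ₘ T) = ∫ x, φ x * (T x B).toReal ∂μ := by
  have hφ_fst : Integrable (fun p : X × Y => φ p.1) (μ ⊗ₘ T) :=
    MeasurePreserving.integrable_comp_of_integrable ⟨measurable_fst, Measure.fst_compProd μ T⟩ hφ
  rw [← Set.univ_prod, Measure.setIntegral_compProd MeasurableSet.univ hB hφ_fst.integrableOn,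
    Measure.restrict_univ]
  simp_rw [setIntegral_const, smul_eq_mul, measureReal_def, mul_comm]

/-- Monotonicity of the Fisher metric along Markov kernels (one-dimensional case):
for a probability measure `μ` on `X`, a Markov kernel `T : X ⇝ Y` and `φ ∈ L²(X, μ)`, the
Radon–Nikodym derivative `ψ = d(T_*(φ·μ))/d(T_*μ)` exists (i.e. `ψ` integrates over each
measurable `B ⊆ Y` against `T_*μ` to `T_*(φ·μ)(B) = ∫_X φ(x) T(x)(B) dμ(x)`), lies in
`L²(Y, T_*μ)`, and satisfies `‖ψ‖_{L²(Y,T_*μ)} ≤ ‖φ‖_{L²(X,μ)}`. -/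
theorem fisher_monotonicity_kernel
    {X Y : Type*} [MeasurableSpace X] [MeasurableSpace Y]
    (μ : Measure X) [IsProbabilityMeasure μ]
    (T : Kernel X Y) [IsMarkovKernel T]
    (φ : X → ℝ) (hφ : MemLp φ 2 μ) :
    ∃ ψ : Y → ℝ, MemLp ψ 2 (μ.bind (fun x => T x)) ∧
      (∀ B : Set Y, MeasurableSet B →
        ∫ y in B, ψ y ∂(μ.bind (fun x => T x)) = ∫ x, φ x * ((T x) B).toReal ∂μ) ∧
      eLpNorm ψ 2 (μ.bind (fun x => T x)) ≤ eLpNorm φ 2 μ := by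
  have hfst : MeasurePreserving Prod.fst (μ ⊗ₘ T) μ := ⟨measurable_fst, Measure.fst_compProd μ T⟩
  have hsnd : MeasurePreserving Prod.snd (μ ⊗ₘ T) (T ∘ₘ μ) :=
    ⟨measurable_snd, Measure.snd_compProd μ T⟩
  obtain ⟨ψ, hψ, hψ_int, hψ_norm⟩ := hsnd.exists_memLp_setIntegral_eq_setIntegral_preimage
    one_le_two (hφ.comp_measurePreserving hfst)
  refine ⟨ψ, hψ, fun B hB => ?_, hψ_norm.trans_eq (eLpNorm_comp_measurePreserving hφ.1 hfst)⟩
  exact (hψ_int B hB).trans (setIntegral_preimage_snd_compProd (hφ.integrable one_le_two) hB)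
end

section
/- Fisher-Neyman factorization gives sufficiency: let μ be a probability measure on X admitting a regular conditional distribution p: Y → P(X) with respect to a measurable map κ: X → Y, and let {ν_θ} be a family of probability measures with ν_θ = (h_θ ∘ κ)·μ for measurable functions h_θ: Y → ℝ≥0. Then for each θ and each measurable A ⊆ X, d(κ_*(1_A·ν_θ))/d(κ_*ν_θ)(y) = p_y(A) for κ_*ν_θ-almost every y; in particular this derivative is independent of θ, so κ is sufficient for the family {ν_θ}. -/
open MeasureTheory

/-! A density that factors through `κ` commutes with pushing forward along `κ`, so
`κ_*(1_A · ν_θ) = h_θ · κ_*(1_A · μ)` and `κ_*ν_θ = h_θ · κ_*μ`. The regular conditional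
distribution says exactly that `κ_*(1_A · μ) = p_·(A) · κ_*μ`, hence both sides of the claim are
the measure `(p_·(A) h_θ) · κ_*μ` evaluated at `B`. -/

namespace MeasureTheory.Measure

variable {X Y : Type*} [MeasurableSpace X] [MeasurableSpace Y] {κ : X → Y} {μ : Measure X}

theorem map_withDensity_comp (hκ : Measurable κ) {g : Y → ENNReal} (hg : Measurable g) :
    (μ.withDensity (g ∘ κ)).map κ = (μ.map κ).withDensity g := by
  ext B hB
  rw [map_apply hκ hB, withDensity_apply _ (hκ hB), withDensity_apply _ hB,
    setLIntegral_map hB hg hκ]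
  rfl

theorem map_restrict_eq_withDensity (hκ : Measurable κ) {A : Set X} {f : Y → ENNReal}
    (hf : ∀ B, MeasurableSet B → μ (A ∩ κ ⁻¹' B) = ∫⁻ y in B, f y ∂(μ.map κ)) :
    (μ.restrict A).map κ = (μ.map κ).withDensity f := by
  ext B hB
  rw [map_apply hκ hB, restrict_apply (hκ hB), withDensity_apply _ hB, Set.inter_comm]
  exact hf B hB

theorem map_restrict_withDensity_comp (hκ : Measurable κ) {A : Set X} (hA : MeasurableSet A)
    {f g : Y → ENNReal} (hf : Measurable f) (hg : Measurable g)
    (hAf : (μ.restrict A).map κ = (μ.map κ).withDensity f) :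
    ((μ.withDensity (g ∘ κ)).restrict A).map κ
      = ((μ.withDensity (g ∘ κ)).map κ).withDensity f := by
  rw [restrict_withDensity hA, map_withDensity_comp hκ hg, map_withDensity_comp hκ hg, hAf,
    ← withDensity_mul _ hf hg, ← withDensity_mul _ hg hf, mul_comm]

end MeasureTheory.Measure

theorem fisher_neyman_sufficiency_general
    {X Y : Type*} [MeasurableSpace X] [MeasurableSpace Y] {Θ : Type*}
    (κ : X → Y) (hκ : Measurable κ)
    (μ : Measure X)
    (p : Y → Measure X) (hp : Measurable p)
    (hcond : ∀ A : Set X, MeasurableSet A → ∀ B : Set Y, MeasurableSet B →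
      μ (A ∩ κ ⁻¹' B) = ∫⁻ y in B, (p y) A ∂(μ.map κ))
    (h : Θ → Y → ENNReal) (hh : ∀ θ, Measurable (h θ))
    (ν : Θ → Measure X) (hν : ∀ θ, ν θ = μ.withDensity (fun x => h θ (κ x))) :
    ∀ θ, ∀ A : Set X, MeasurableSet A → ∀ B : Set Y, MeasurableSet B →
      ((ν θ).restrict A).map κ B = ∫⁻ y in B, (p y) A ∂((ν θ).map κ) := by
  intro θ A hA B hB
  have hpA : Measurable (fun y => p y A) := (Measure.measurable_coe hA).comp hp
  have hνA : ((ν θ).restrict A).map κ = ((ν θ).map κ).withDensity (fun y => p y A) := by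
    rw [hν]
    exact Measure.map_restrict_withDensity_comp hκ hA hpA (hh θ)
      (Measure.map_restrict_eq_withDensity hκ (hcond A hA))
  rw [hνA, withDensity_apply _ hB]

/-- Fisher–Neyman factorization gives sufficiency: let `μ` be a probability
measure on `X` with a regular conditional distribution `p : Y → P(X)` w.r.t. a measurable
`κ : X → Y` (i.e. `μ(A ∩ κ⁻¹ B) = ∫_B p_y(A) d(κ_*μ)` for all measurable `A`, `B`), and let
`ν_θ = (h_θ ∘ κ)·μ` be a family of probability measures with densities factoring through `κ`.
Then `d(κ_*(1_A·ν_θ))/d(κ_*ν_θ)(y) = p_y(A)` for `κ_*ν_θ`-a.e. `y`, i.e.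
`κ_*(1_A·ν_θ)(B) = ∫_B p_y(A) d(κ_*ν_θ)` for all measurable `B`; in particular the derivative
is independent of `θ`, so `κ` is sufficient for the family. -/
theorem fisher_neyman_sufficiency
    {X Y : Type*} [MeasurableSpace X] [MeasurableSpace Y] {Θ : Type*}
    (κ : X → Y) (hκ : Measurable κ)
    (μ : Measure X) [IsProbabilityMeasure μ]
    (p : Y → Measure X) (hp : Measurable p) (hprob : ∀ y, IsProbabilityMeasure (p y))
    (hcond : ∀ A : Set X, MeasurableSet A → ∀ B : Set Y, MeasurableSet B →
      μ (A ∩ κ ⁻¹' B) = ∫⁻ y in B, (p y) A ∂(μ.map κ))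
    (h : Θ → Y → ENNReal) (hh : ∀ θ, Measurable (h θ))
    (ν : Θ → Measure X) (hν : ∀ θ, ν θ = μ.withDensity (fun x => h θ (κ x)))
    (hνprob : ∀ θ, IsProbabilityMeasure (ν θ)) :
    ∀ θ, ∀ A : Set X, MeasurableSet A → ∀ B : Set Y, MeasurableSet B →
      ((ν θ).restrict A).map κ B = ∫⁻ y in B, (p y) A ∂((ν θ).map κ) :=
  fisher_neyman_sufficiency_general κ hκ μ p hp hcond h hh ν hν
end

section
/- If T: X ⇝ Y is a Markov kernel sufficient for a family P of probability measures on X (i.e., there is a Markov kernel p: Y ⇝ X with p^*(h) = d T_*(h·μ)/d T_*(μ) for all bounded measurable h and all μ ∈ P), then p_*(T_*(μ)) = μ for every μ ∈ P. -/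
open MeasureTheory ProbabilityTheory

/-! Apply the sufficiency identity to the density `h = 𝟙_s` and compare total masses: on the
left, `T` is Markov, so `T_*(𝟙_s · μ)` has mass `μ s`; on the right, `p^*(𝟙_s) = p · s`, so
`(p^*(𝟙_s) · T_*μ)(univ) = ∫ p y s dT_*μ = p_*(T_*μ) s`. -/

lemma MeasureTheory.Measure.withDensity_kernel_apply_univ {X Y : Type*}
    [MeasurableSpace X] [MeasurableSpace Y] (κ : Kernel Y X) (ν : Measure Y)
    {s : Set X} (hs : MeasurableSet s) :
    ν.withDensity (fun y => κ y s) Set.univ = (κ ∘ₘ ν) s := by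
  rw [withDensity_apply _ .univ, setLIntegral_univ, Measure.bind_apply hs κ.aemeasurable]

theorem sufficient_kernel_recovers_general
    {X Y : Type*} [MeasurableSpace X] [MeasurableSpace Y]
    (T : Kernel X Y) [IsMarkovKernel T] (p : Kernel Y X)
    (P : Set (Measure X))
    (hsuff : ∀ μ ∈ P, ∀ h : X → ENNReal, Measurable h →
      (μ.withDensity h).bind (fun x => T x)
        = (μ.bind (fun x => T x)).withDensity (fun y => ∫⁻ x, h x ∂(p y))) :
    ∀ μ ∈ P, (μ.bind (fun x => T x)).bind (fun y => p y) = μ := by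
  intro μ hμ
  ext s hs
  have hmass := congrArg (· Set.univ) (hsuff μ hμ (s.indicator 1) (measurable_one.indicator hs))
  simp only [withDensity_indicator_one hs, lintegral_indicator_one hs, Measure.comp_apply_univ,
    Measure.restrict_apply_univ] at hmass
  rw [hmass, Measure.withDensity_kernel_apply_univ p _ hs]

/-- If the Markov kernel `T : X ⇝ Y` is sufficient for a family `P` of
probability measures on `X`, witnessed by a Markov kernel `p : Y ⇝ X` with
`T_*(h·μ) = p^*(h) · T_*(μ)` for all (bounded) measurable densities `h` and all `μ ∈ P`
(where `p^*(h)(y) = ∫ h d(p y)`), then `p_*(T_*(μ)) = μ` for every `μ ∈ P`. -/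
theorem sufficient_kernel_recovers
    {X Y : Type*} [MeasurableSpace X] [MeasurableSpace Y]
    (T : Kernel X Y) [IsMarkovKernel T] (p : Kernel Y X) [IsMarkovKernel p]
    (P : Set (Measure X)) (hP : ∀ μ ∈ P, IsProbabilityMeasure μ)
    (hsuff : ∀ μ ∈ P, ∀ h : X → ENNReal, Measurable h →
      (μ.withDensity h).bind (fun x => T x)
        = (μ.bind (fun x => T x)).withDensity (fun y => ∫⁻ x, h x ∂(p y))) :
    ∀ μ ∈ P, (μ.bind (fun x => T x)).bind (fun y => p y) = μ :=
  sufficient_kernel_recovers_general T p P hsuff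
end
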